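/- (Until transfer across compatible blocks) Let w ≡_d w' with induced map f and φ1, φ2 Prompt-LTL\X formulas. If (w, i, k) ⊨ φ1 U φ2 and the induction hypotheses hold (for all e, if (w,e,k) ⊨ φ1 then (w',l,d·k) ⊨ φ1 for all l ∈ f(e), and similarly for φ2), then for all j ∈ f(i), (w', j, d·k) ⊨ φ1 U φ2. -/

import Mathlib

/-- Start position of the `i`-th block in a decomposition with block lengths `n`. -/
def blockStart (n : ℕ → ℕ) (i : ℕ) : ℕ := ∑ l ∈ Finset.range i, n l

/-- Position `j` belongs to the `i`-th block of the decomposition with lengths `n`. -/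
def inBlock (n : ℕ → ℕ) (i j : ℕ) : Prop :=
  blockStart n i ≤ j ∧ j < blockStart n i + n i

/-- `n` is a block decomposition of the infinite word `w`: all blocks are nonempty
and `w` is constant on each block. -/
def IsDecomp {α : Type*} (w : ℕ → α) (n : ℕ → ℕ) : Prop :=
  (∀ i, 1 ≤ n i) ∧ ∀ i j, inBlock n i j → w j = w (blockStart n i)

/-- The decompositions `n`, `m` of `w`, `w'` are `d`-compatible: corresponding blocks
carry the same letter and their lengths differ by a factor of at most `d`. -/
def Compat {α : Type*} (d : ℕ) (w w' : ℕ → α) (n m : ℕ → ℕ) : Prop :=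
  IsDecomp w n ∧ IsDecomp w' m ∧
  (∀ i, n i ≤ d * m i) ∧ (∀ i, m i ≤ d * n i) ∧
  ∀ i, w (blockStart n i) = w' (blockStart m i)

/-- `w` and `w'` are `d`-stutter equivalent. -/
def StutterEquiv {α : Type*} (d : ℕ) (w w' : ℕ → α) : Prop :=
  ∃ n m : ℕ → ℕ, Compat d w w' n m

/-- Membership in the position-correspondence map `f` induced by the decompositions
`n`, `m`: `j ∈ f(i)` iff `i` lies in the `y`-th block of `n` and `j` in the `y`-th
block of `m`, for some `y`. -/
def fmem (n m : ℕ → ℕ) (i j : ℕ) : Prop :=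
  ∃ y, inBlock n y i ∧ inBlock m y j

/-- Prompt-LTL without Next: atoms, negated atoms, ∨, ∧, prompt-eventually, Until, Release. -/
inductive PLTL (AP : Type*) : Type _
  | atom : AP → PLTL AP
  | natom : AP → PLTL AP
  | disj : PLTL AP → PLTL AP → PLTL AP
  | conj : PLTL AP → PLTL AP → PLTL AP
  | fp : PLTL AP → PLTL AP
  | untl : PLTL AP → PLTL AP → PLTL AP
  | rel : PLTL AP → PLTL AP → PLTL AP

/-- Semantics of Prompt-LTL\X over infinite words `w : ℕ → Set AP`, position `i`, bound `k`. -/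
def sat {AP : Type*} (w : ℕ → Set AP) : ℕ → ℕ → PLTL AP → Prop
  | i, _, .atom a => a ∈ w i
  | i, _, .natom a => a ∉ w i
  | i, k, .disj φ ψ => sat w i k φ ∨ sat w i k ψ
  | i, k, .conj φ ψ => sat w i k φ ∧ sat w i k ψ
  | i, k, .fp φ => ∃ j, i ≤ j ∧ j ≤ i + k ∧ sat w j k φ
  | i, k, .untl φ ψ => ∃ j, i ≤ j ∧ sat w j k ψ ∧ ∀ e, i ≤ e → e < j → sat w e k φ
  | i, k, .rel φ ψ => ∀ j, i ≤ j → sat w j k ψ ∨ ∃ e, i ≤ e ∧ e < j ∧ sat w e k φ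

/-! Every position `l` of `w'` between `j ∈ f(i)` and the first block of `w'` matching the
`φ2`-witness `p` lies in a block of index `z` between those of `i` and `p`; the position
`max i (blockStart n z)` of `w` then lies in block `z` and in `[i, p)`, so it satisfies `φ1`
and corresponds to `l`. The witness in `w'` is `max j (blockStart m y')`, where `y'` is the
block of `p`. -/

section Blocks

variable {n : ℕ → ℕ}

lemma blockStart_succ (n : ℕ → ℕ) (y : ℕ) : blockStart n (y + 1) = blockStart n y + n y :=
  Finset.sum_range_succ _ _

lemma blockStart_mono (n : ℕ → ℕ) : Monotone (blockStart n) := fun _ _ h =>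
  Finset.sum_le_sum_of_subset (Finset.range_mono h)

lemma blockEnd_le_blockStart {y y' : ℕ} (h : y < y') :
    blockStart n y + n y ≤ blockStart n y' :=
  blockStart_succ n y ▸ blockStart_mono n h

lemma blockEnd_mono {y y' : ℕ} (h : y ≤ y') :
    blockStart n y + n y ≤ blockStart n y' + n y' := by
  simpa only [blockStart_succ] using blockStart_mono n (Nat.succ_le_succ h)

lemma inBlock_blockStart {y : ℕ} (hy : 0 < n y) : inBlock n y (blockStart n y) :=
  ⟨le_rfl, Nat.lt_add_of_pos_right hy⟩

lemma exists_inBlock (hn : ∀ y, 0 < n y) (j : ℕ) : ∃ y, inBlock n y j := by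
  induction j with
  | zero => exact ⟨0, inBlock_blockStart (hn 0)⟩
  | succ j ih =>
    obtain ⟨y, hy₁, hy₂⟩ := ih
    by_cases hend : j + 1 < blockStart n y + n y
    · exact ⟨y, by omega, hend⟩
    · refine ⟨y + 1, ?_, ?_⟩ <;> rw [blockStart_succ]
      · omega
      · have := hn (y + 1)
        omega

namespace inBlock

variable {y y' i i' : ℕ}

lemma lt_of_lt (hi : inBlock n y i) (hi' : inBlock n y' i') (h : y < y') : i < i' :=
  calc i < blockStart n y + n y := hi.2
    _ ≤ blockStart n y' := blockEnd_le_blockStart h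
    _ ≤ i' := hi'.1

lemma le_of_le (hi : inBlock n y i) (hi' : inBlock n y' i') (h : i ≤ i') : y ≤ y' :=
  not_lt.1 fun hlt => (hi'.lt_of_lt hi hlt).not_ge h

lemma max_blockStart (hi : inBlock n y i) (h : y ≤ y') (hy' : 0 < n y') :
    inBlock n y' (max i (blockStart n y')) :=
  ⟨le_max_right _ _,
    max_lt (hi.2.trans_le (blockEnd_mono h)) (Nat.lt_add_of_pos_right hy')⟩

end inBlock

end Blocks

lemma exists_fmem_between {n m : ℕ → ℕ} (hn : ∀ y, 0 < n y) (hm : ∀ y, 0 < m y)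
    {y y' i j p l : ℕ} (hi : inBlock n y i) (hj : inBlock m y j) (hp : inBlock n y' p)
    (hjl : j ≤ l) (hl : l < blockStart m y') :
    ∃ e, i ≤ e ∧ e < p ∧ fmem n m e l := by
  obtain ⟨z, hz⟩ := exists_inBlock hm l
  have hyz : y ≤ z := hj.le_of_le hz hjl
  have hzy' : z < y' := not_le.1 fun h => ((blockStart_mono m h).trans hz.1).not_gt hl
  have he := hi.max_blockStart hyz (hn z)
  exact ⟨_, le_max_left _ _, he.lt_of_lt hp hzy', z, he, hz⟩

/-- Until transfer across compatible blocks: if (w,i,k) ⊨ φ1 U φ2 and the induction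
hypotheses hold for φ1 and φ2, then (w',j,d·k) ⊨ φ1 U φ2 for all j ∈ f(i). -/
theorem until_transfer {AP : Type*} (d k i : ℕ) (w w' : ℕ → Set AP) (n m : ℕ → ℕ)
    (φ1 φ2 : PLTL AP) (h : Compat d w w' n m)
    (hsat : sat w i k (.untl φ1 φ2))
    (H1 : ∀ e, sat w e k φ1 → ∀ l, fmem n m e l → sat w' l (d * k) φ1)
    (H2 : ∀ e, sat w e k φ2 → ∀ l, fmem n m e l → sat w' l (d * k) φ2) :
    ∀ j, fmem n m i j → sat w' j (d * k) (.untl φ1 φ2) := by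
  obtain ⟨⟨hn, -⟩, ⟨hm, -⟩, -⟩ := h
  rintro j ⟨y, hi, hj⟩
  obtain ⟨p, hip, hp2, hp1⟩ := hsat
  obtain ⟨y', hp⟩ := exists_inBlock hn p
  have hyy' : y ≤ y' := hi.le_of_le hp hip
  refine ⟨max j (blockStart m y'), le_max_left _ _,
    H2 p hp2 _ ⟨y', hp, hj.max_blockStart hyy' (hm y')⟩, fun l hjl hl => ?_⟩
  have hl' : l < blockStart m y' := (lt_max_iff.1 hl).resolve_left hjl.not_gt
  obtain ⟨e, hie, hep, hel⟩ := exists_fmem_between hn hm hi hj hp hjl hl'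
  exact H1 e (hp1 e hie hep) l hel
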